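/- arXiv:2410.18254 — 4 statements merged into one kernel-verified Lean document; each statement's English description precedes it below -/
import Mathlib

section
/- For self-adjoint operators A₁ and A₂ on ℂ^d, the spectrum of A₁ + A₂ (arranged in decreasing order) is majorized by the sum of the decreasingly ordered spectra of A₁ and A₂; that is, for every k ∈ [d], the sum of the k largest eigenvalues of A₁ + A₂ is at most the sum of the k largest eigenvalues of A₁ plus the sum of the k largest eigenvalues of A₂, with equality of total traces. -/
/-!
Ky Fan's maximum principle: for an orthonormal family `v₁, …, v_k` and a self-adjoint `T`,
`∑ re ⟪vᵢ, T vᵢ⟫ ≤ s_k(λ(T))`. Expanding in an eigenbasis `(b_j)` of `T` turns the left side into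
`∑ c_j λ_j` with `c_j = ∑ᵢ ‖⟪vᵢ, b_j⟫‖²`; Bessel gives `c_j ≤ 1` and Parseval `∑ c_j = k`, and a
threshold between the `k` largest `λ_j` and the others shows such a weighted sum is at most `s_k`.
Taking for `v` the eigenvectors of `A₁ + A₂` belonging to any `k` of its eigenvalues and applying
the principle to `A₁` and to `A₂` gives the inequalities; for `k = d` equality is additivity of
the trace.
-/

open Matrix

/-- Sum of the `k` largest values of `f` (as the sup of sums over `k`-subsets). -/
noncomputable def sk {ι : Type*} [Fintype ι] (f : ι → ℝ) (k : ℕ) : ℝ :=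
  sSup {x | ∃ S : Finset ι, S.card = k ∧ x = ∑ i ∈ S, f i}

open Finset
open scoped InnerProductSpace

section TopSums

variable {ι : Type*} [Fintype ι] (f : ι → ℝ)

lemma sum_le_sk {k : ℕ} {S : Finset ι} (hS : #S = k) : ∑ i ∈ S, f i ≤ sk f k := by
  refine le_csSup ?_ ⟨S, hS, rfl⟩
  refine (Set.finite_range fun S : Finset ι ↦ ∑ i ∈ S, f i).subset ?_ |>.bddAbove
  rintro _ ⟨S, -, rfl⟩
  exact ⟨S, rfl⟩

lemma sk_le {k : ℕ} (hk : k ≤ Fintype.card ι) {a : ℝ}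
    (h : ∀ S : Finset ι, #S = k → ∑ i ∈ S, f i ≤ a) : sk f k ≤ a := by
  obtain ⟨S, -, hS⟩ := exists_subset_card_eq (s := univ) (by simpa using hk)
  exact csSup_le ⟨_, S, hS, rfl⟩ fun _ ⟨S, hS, hx⟩ ↦ hx ▸ h S hS

lemma sk_card : sk f (Fintype.card ι) = ∑ i, f i :=
  le_antisymm (sk_le f le_rfl fun S hS ↦ by rw [(card_eq_iff_eq_univ S).mp hS])
    (sum_le_sk f card_univ)

lemma exists_card_eq_threshold {k : ℕ} (hk : k ≤ Fintype.card ι) :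
    ∃ S : Finset ι, #S = k ∧ ∃ t, (∀ i ∈ S, t ≤ f i) ∧ ∀ i ∉ S, f i ≤ t := by
  classical
  induction k with
  | zero =>
    refine ⟨∅, rfl, ∑ i, |f i|, by simp, fun i _ ↦ ?_⟩
    exact (le_abs_self _).trans (single_le_sum (fun j _ ↦ abs_nonneg (f j)) (mem_univ i))
  | succ k ih =>
    obtain ⟨S, hS, t, hSt, hSct⟩ := ih (by omega)
    obtain ⟨j, hj, hjmax⟩ := exists_max_image Sᶜ f <| card_pos.mp <| by
      rw [card_compl]; omega
    have hjS : j ∉ S := mem_compl.mp hj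
    refine ⟨insert j S, by rw [card_insert_of_notMem hjS, hS], f j, ?_, ?_⟩
    · simp only [mem_insert, forall_eq_or_imp, le_refl, true_and]
      exact fun i hi ↦ (hjmax j hj).trans (hSct j hjS) |>.trans (hSt i hi)
    · intro i hi
      exact hjmax i (mem_compl.mpr fun h ↦ hi (mem_insert_of_mem h))

lemma sum_mul_le_sum_of_threshold {c : ι → ℝ} {S : Finset ι} {t : ℝ}
    (hS : ∀ i ∈ S, t ≤ f i) (hSc : ∀ i ∉ S, f i ≤ t)
    (hc0 : ∀ i, 0 ≤ c i) (hc1 : ∀ i, c i ≤ 1) (hc : ∑ i, c i = #S) :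
    ∑ i, c i * f i ≤ ∑ i ∈ S, f i := by
  classical
  have hsplit : ∑ i, c i * f i - ∑ i ∈ S, f i
      = ∑ i, (c i - if i ∈ S then 1 else 0) * (f i - t) := by
    simp only [sub_mul, mul_sub, sum_sub_distrib, ← sum_mul, hc, ite_mul, one_mul, zero_mul,
      sum_ite_mem, univ_inter, sum_const, nsmul_eq_mul]
    ring
  have hterm : ∀ i, (c i - if i ∈ S then 1 else 0) * (f i - t) ≤ 0 := by
    intro i
    by_cases hi : i ∈ S
    · simpa [hi] using
        mul_nonpos_of_nonpos_of_nonneg (sub_nonpos.mpr (hc1 i)) (sub_nonneg.mpr (hS i hi))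
    · simpa [hi] using mul_nonpos_of_nonneg_of_nonpos (hc0 i) (sub_nonpos.mpr (hSc i hi))
  linarith [sum_nonpos fun i (_ : i ∈ univ) ↦ hterm i]

lemma sum_mul_le_sk {c : ι → ℝ} {k : ℕ} (hc0 : ∀ i, 0 ≤ c i) (hc1 : ∀ i, c i ≤ 1)
    (hc : ∑ i, c i = k) : ∑ i, c i * f i ≤ sk f k := by
  have hk : k ≤ Fintype.card ι := by
    have := sum_le_sum fun i (_ : i ∈ univ) ↦ hc1 i
    simp only [hc, sum_const, card_univ, nsmul_eq_mul, mul_one] at this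
    exact_mod_cast this
  obtain ⟨S, hS, t, hSt, hSct⟩ := exists_card_eq_threshold f hk
  exact (sum_mul_le_sum_of_threshold f hSt hSct hc0 hc1 (hS ▸ hc)).trans (sum_le_sk f hS)

end TopSums

section KyFan

variable {𝕜 E ι : Type*} [RCLike 𝕜] [NormedAddCommGroup E] [InnerProductSpace 𝕜 E] [Fintype ι]
  {T : E →ₗ[𝕜] E} {b : OrthonormalBasis ι 𝕜 E} {μ : ι → ℝ}

lemma LinearMap.IsSymmetric.re_inner_apply_self_eq_sum (hT : T.IsSymmetric)
    (hb : ∀ j, T (b j) = (μ j : 𝕜) • b j) (x : E) :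
    RCLike.re ⟪x, T x⟫_𝕜 = ∑ j, μ j * ‖⟪b j, x⟫_𝕜‖ ^ 2 := by
  have hterm : ∀ j, ⟪x, b j⟫_𝕜 * ⟪b j, T x⟫_𝕜 = ((μ j * ‖⟪b j, x⟫_𝕜‖ ^ 2 : ℝ) : 𝕜) := by
    intro j
    rw [← hT, hb, inner_smul_left, RCLike.conj_ofReal, ← inner_conj_symm x, RCLike.ofReal_mul,
      RCLike.ofReal_pow, ← RCLike.conj_mul]
    ring
  rw [← b.sum_inner_mul_inner, sum_congr rfl fun j _ ↦ hterm j, ← RCLike.ofReal_sum,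
    RCLike.ofReal_re]

lemma LinearMap.IsSymmetric.sum_re_inner_apply_self_le_sk (hT : T.IsSymmetric)
    (hb : ∀ j, T (b j) = (μ j : 𝕜) • b j) {κ : Type*} [Fintype κ] {v : κ → E}
    (hv : Orthonormal 𝕜 v) :
    ∑ i, RCLike.re ⟪v i, T (v i)⟫_𝕜 ≤ sk μ (Fintype.card κ) := by
  set c : ι → ℝ := fun j ↦ ∑ i, ‖⟪v i, b j⟫_𝕜‖ ^ 2
  have hc0 : ∀ j, 0 ≤ c j := fun j ↦ sum_nonneg fun i _ ↦ by positivity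
  have hc1 : ∀ j, c j ≤ 1 := fun j ↦ by
    simpa [b.orthonormal.1 j] using hv.sum_inner_products_le (b j) (s := univ)
  have hc : ∑ j, c j = Fintype.card κ := by
    rw [sum_comm]
    simp [b.sum_sq_norm_inner_left, hv.1]
  calc ∑ i, RCLike.re ⟪v i, T (v i)⟫_𝕜 = ∑ j, c j * μ j := by
        simp only [hT.re_inner_apply_self_eq_sum hb, c, sum_mul, norm_inner_symm]
        rw [sum_comm]
        simp only [mul_comm]
    _ ≤ sk μ (Fintype.card κ) := sum_mul_le_sk μ hc0 hc1 hc

lemma sk_le_sk_add_of_isSymmetric {ι₁ ι₂ : Type*} [Fintype ι₁] [Fintype ι₂]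
    {T₁ T₂ : E →ₗ[𝕜] E} (hT₁ : T₁.IsSymmetric) (hT₂ : T₂.IsSymmetric)
    {b : OrthonormalBasis ι 𝕜 E} {b₁ : OrthonormalBasis ι₁ 𝕜 E} {b₂ : OrthonormalBasis ι₂ 𝕜 E}
    {μ : ι → ℝ} {μ₁ : ι₁ → ℝ} {μ₂ : ι₂ → ℝ} (hb : ∀ j, (T₁ + T₂) (b j) = (μ j : 𝕜) • b j)
    (hb₁ : ∀ j, T₁ (b₁ j) = (μ₁ j : 𝕜) • b₁ j) (hb₂ : ∀ j, T₂ (b₂ j) = (μ₂ j : 𝕜) • b₂ j)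
    {k : ℕ} (hk : k ≤ Fintype.card ι) :
    sk μ k ≤ sk μ₁ k + sk μ₂ k := by
  refine sk_le μ hk fun S hS ↦ ?_
  have hv : Orthonormal 𝕜 fun i : S ↦ b i := b.orthonormal.comp _ Subtype.val_injective
  have hμ : ∀ j, μ j = RCLike.re ⟪b j, T₁ (b j)⟫_𝕜 + RCLike.re ⟪b j, T₂ (b j)⟫_𝕜 := by
    intro j
    rw [← map_add, ← inner_add_right, ← LinearMap.add_apply, hb, inner_smul_right,
      inner_self_eq_one_of_norm_eq_one (b.orthonormal.1 j)]
    simp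
  calc ∑ i ∈ S, μ i
      = ∑ i : S, RCLike.re ⟪b i, T₁ (b i)⟫_𝕜 + ∑ i : S, RCLike.re ⟪b i, T₂ (b i)⟫_𝕜 := by
        rw [← sum_add_distrib, ← sum_coe_sort S]
        exact sum_congr rfl fun j _ ↦ hμ j
    _ ≤ sk μ₁ k + sk μ₂ k := by
        rw [← hS, ← Fintype.card_coe S]
        exact add_le_add (hT₁.sum_re_inner_apply_self_le_sk hb₁ hv)
          (hT₂.sum_re_inner_apply_self_le_sk hb₂ hv)

end KyFan

namespace Matrix.IsHermitian

variable {𝕜 n : Type*} [RCLike 𝕜] [Fintype n] [DecidableEq n] {A B : Matrix n n 𝕜}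

lemma toEuclideanLin_eigenvectorBasis (hA : A.IsHermitian) (j : n) :
    toEuclideanLin A (hA.eigenvectorBasis j) = (hA.eigenvalues j : 𝕜) • hA.eigenvectorBasis j := by
  rw [toLpLin_apply, hA.mulVec_eigenvectorBasis, RCLike.real_smul_eq_coe_smul (K := 𝕜)]
  rfl

lemma sum_eigenvalues_add (hA : A.IsHermitian) (hB : B.IsHermitian) :
    ∑ i, (hA.add hB).eigenvalues i = ∑ i, hA.eigenvalues i + ∑ i, hB.eigenvalues i := by
  apply RCLike.ofReal_injective (K := 𝕜)
  push_cast
  rw [← trace_eq_sum_eigenvalues, ← trace_eq_sum_eigenvalues, ← trace_eq_sum_eigenvalues,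
    trace_add]

lemma sk_eigenvalues_add_le (hA : A.IsHermitian) (hB : B.IsHermitian) {k : ℕ}
    (hk : k ≤ Fintype.card n) :
    sk (hA.add hB).eigenvalues k ≤ sk hA.eigenvalues k + sk hB.eigenvalues k :=
  sk_le_sk_add_of_isSymmetric (isSymmetric_toEuclideanLin_iff.mpr hA)
    (isSymmetric_toEuclideanLin_iff.mpr hB)
    (by simpa only [map_add] using (hA.add hB).toEuclideanLin_eigenvectorBasis)
    hA.toEuclideanLin_eigenvectorBasis hB.toEuclideanLin_eigenvectorBasis hk

end Matrix.IsHermitian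

/-- Ky Fan's majorization relation: λ(A₁ + A₂) ⪯ λ(A₁) + λ(A₂). -/
theorem stmt0 {d : ℕ} (A₁ A₂ : Matrix (Fin d) (Fin d) ℂ)
    (hA₁ : A₁.IsHermitian) (hA₂ : A₂.IsHermitian) :
    (∀ k ≤ d, sk (hA₁.add hA₂).eigenvalues k ≤ sk hA₁.eigenvalues k + sk hA₂.eigenvalues k)
      ∧ sk (hA₁.add hA₂).eigenvalues d = sk hA₁.eigenvalues d + sk hA₂.eigenvalues d := by
  refine ⟨fun k hk ↦ hA₁.sk_eigenvalues_add_le hA₂ (by simpa using hk), ?_⟩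
  have hsk (f : Fin d → ℝ) : sk f d = ∑ i, f i := by simpa using sk_card f
  simpa only [hsk] using hA₁.sum_eigenvalues_add hA₂
end

section
/- (Fan's maximum principle) For a self-adjoint operator A on ℂ^d and k ∈ [d], the sum of the k largest eigenvalues of A equals the maximum of tr(P_W A) over all orthogonal projections P_W onto k-dimensional subspaces W of ℂ^d. -/
/-!
Diagonalise `A = U Λ U*`. Conjugating a rank-`k` orthogonal projection `P` by `U` gives an
orthogonal projection `Q` of the same rank, and `tr (P A) = ∑ᵢ λᵢ Qᵢᵢ`. The diagonal entries
`Qᵢᵢ` lie in `[0, 1]` (both `Q` and `1 - Q` are positive semidefinite) and sum to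
`tr Q = rank Q = k`, so this weighted sum is at most the sum of the `k` largest `λᵢ`.
Equality holds for the projection onto the span of the corresponding eigenvectors.
-/

open Matrix

section TopSets

variable {ι : Type*}

def IsTopSet (f : ι → ℝ) (S : Finset ι) : Prop :=
  ∀ i ∈ S, ∀ j ∉ S, f j ≤ f i

variable [Fintype ι]

theorem exists_isTopSet_card_eq (f : ι → ℝ) {k : ℕ} (hk : k ≤ Fintype.card ι) :
    ∃ S : Finset ι, S.card = k ∧ IsTopSet f S := by
  classical
  obtain ⟨S, hS, hmax⟩ := Finset.exists_max_image (Finset.univ.powersetCard k)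
    (fun T => ∑ i ∈ T, f i) (Finset.powersetCard_nonempty.2 (by simpa using hk))
  simp only [Finset.mem_powersetCard_univ] at hS hmax
  refine ⟨S, hS, fun i hi j hj => not_lt.1 fun hlt => ?_⟩
  have hj' : j ∉ S.erase i := fun h => hj (Finset.mem_of_mem_erase h)
  have hswap := hmax (insert j (S.erase i)) (by
    rw [Finset.card_insert_of_notMem hj', Finset.card_erase_of_mem hi, hS,
      Nat.sub_add_cancel (hS ▸ Finset.card_pos.2 ⟨i, hi⟩)])
  rw [Finset.sum_insert hj', Finset.sum_erase_eq_sub hi] at hswap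
  linarith

theorem IsTopSet.sum_mul_le {f : ι → ℝ} {S : Finset ι} (hS : IsTopSet f S) {t : ι → ℝ}
    (ht0 : ∀ i, 0 ≤ t i) (ht1 : ∀ i, t i ≤ 1) (hsum : ∑ i, t i = S.card) :
    ∑ i, f i * t i ≤ ∑ i ∈ S, f i := by
  classical
  obtain rfl | ⟨i₀, hi₀⟩ := S.eq_empty_or_nonempty
  · have ht : ∀ i ∈ Finset.univ, t i = 0 :=
      (Finset.sum_eq_zero_iff_of_nonneg fun i _ => ht0 i).1 (by simpa using hsum)
    simp [Finset.sum_eq_zero fun i hi => show f i * t i = 0 by rw [ht i hi, mul_zero]]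
  set m := S.inf' ⟨i₀, hi₀⟩ f
  let χ : ι → ℝ := fun i => if i ∈ S then 1 else 0
  have hχ : ∑ i, χ i = S.card := by simp [χ]
  -- with a threshold `m` separating `f` on `S` from `f` off `S`, every term below is `≤ 0`
  have key : ∑ i, f i * t i - ∑ i ∈ S, f i = ∑ i, (f i - m) * (t i - χ i) := by
    simp only [sub_mul, mul_sub, Finset.sum_sub_distrib, ← Finset.mul_sum, hsum, hχ]
    simp [χ, mul_ite]
  have hterm : ∀ i, (f i - m) * (t i - χ i) ≤ 0 := by
    intro i
    by_cases hi : i ∈ S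
    · simp only [χ, if_pos hi]
      exact mul_nonpos_of_nonneg_of_nonpos (sub_nonneg.2 (S.inf'_le f hi)) (by linarith [ht1 i])
    · obtain ⟨i₁, hi₁, hm⟩ := S.exists_mem_eq_inf' ⟨i₀, hi₀⟩ f
      simp only [χ, if_neg hi, sub_zero]
      exact mul_nonpos_of_nonpos_of_nonneg (by linarith [hS i₁ hi₁ i hi]) (ht0 i)
  linarith [Finset.sum_nonpos fun i (_ : i ∈ Finset.univ) => hterm i]

theorem IsTopSet.sk_eq {f : ι → ℝ} {S : Finset ι} (hS : IsTopSet f S) :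
    sk f S.card = ∑ i ∈ S, f i := by
  classical
  refine IsGreatest.csSup_eq ⟨⟨S, rfl, rfl⟩, ?_⟩
  rintro x ⟨T, hT, rfl⟩
  have := hS.sum_mul_le (t := fun i => if i ∈ T then 1 else 0)
    (fun i => by by_cases h : i ∈ T <;> simp [h]) (fun i => by by_cases h : i ∈ T <;> simp [h])
    (by simp [hT])
  simpa [mul_ite] using this

end TopSets

namespace Matrix

variable {n : Type*} [Fintype n]

open scoped ComplexOrder in
theorem IsHermitian.re_diag_nonneg_of_isIdempotentElem {𝕜 : Type*} [RCLike 𝕜]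
    {Q : Matrix n n 𝕜} (hQ : Q.IsHermitian) (hQ2 : IsIdempotentElem Q) (i : n) :
    0 ≤ RCLike.re (Q i i) := by
  have hpsd : Q.PosSemidef := by
    simpa [hQ.eq, hQ2.eq] using posSemidef_conjTranspose_mul_self Q
  exact RCLike.nonneg_iff.1 hpsd.diag_nonneg |>.1

variable [DecidableEq n]

theorem trace_eq_rank_of_isIdempotentElem {K : Type*} [Field K] {P : Matrix n n K}
    (hP : IsIdempotentElem P) : P.trace = P.rank := by
  have hP' : IsIdempotentElem (toLin' P) := hP.map toLinAlgEquiv'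
  rw [← trace_toLin'_eq, (LinearMap.isProj_range_iff_isIdempotentElem _).2 hP' |>.trace, rank,
    ← toLin'_apply']

theorem rank_conjStarAlgAut {K : Type*} [Field K] [StarRing K] (u : unitary (Matrix n n K))
    (X : Matrix n n K) : (Unitary.conjStarAlgAut K _ u X).rank = X.rank := by
  have hdet (v : unitary (Matrix n n K)) : IsUnit (v : Matrix n n K).det :=
    (isUnit_iff_isUnit_det _).1 Unitary.isUnit_coe
  rw [Unitary.conjStarAlgAut_apply,
    rank_mul_eq_left_of_isUnit_det _ _ (by simpa using hdet (star u)),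
    rank_mul_eq_right_of_isUnit_det _ _ (hdet u)]

variable {𝕜 : Type*} [RCLike 𝕜]

theorem IsHermitian.re_diag_le_one_of_isIdempotentElem {Q : Matrix n n 𝕜} (hQ : Q.IsHermitian)
    (hQ2 : IsIdempotentElem Q) (i : n) : RCLike.re (Q i i) ≤ 1 := by
  simpa using (isHermitian_one.sub hQ).re_diag_nonneg_of_isIdempotentElem hQ2.one_sub i

theorem re_trace_mul_diagonal (Q : Matrix n n 𝕜) (f : n → ℝ) :
    RCLike.re (Q * diagonal (RCLike.ofReal ∘ f)).trace = ∑ i, f i * RCLike.re (Q i i) := by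
  simp [trace, mul_diagonal, mul_comm]

theorem IsHermitian.re_trace_mul_diagonal_le_sk {Q : Matrix n n 𝕜} (hQ : Q.IsHermitian)
    (hQ2 : IsIdempotentElem Q) (f : n → ℝ) :
    RCLike.re (Q * diagonal (RCLike.ofReal ∘ f)).trace ≤ sk f Q.rank := by
  obtain ⟨S, hS, htop⟩ := exists_isTopSet_card_eq f Q.rank_le_card_width
  have hsum : ∑ i, RCLike.re (Q i i) = S.card := by
    simpa [trace, hS] using congrArg RCLike.re (trace_eq_rank_of_isIdempotentElem hQ2)
  rw [re_trace_mul_diagonal, ← hS, htop.sk_eq]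
  exact htop.sum_mul_le (hQ.re_diag_nonneg_of_isIdempotentElem hQ2)
    (hQ.re_diag_le_one_of_isIdempotentElem hQ2) hsum

end Matrix

theorem stmt1_general {d : ℕ} (A : Matrix (Fin d) (Fin d) ℂ) (hA : A.IsHermitian)
    (k : ℕ) (hkd : k ≤ d) :
    IsGreatest {x : ℝ | ∃ P : Matrix (Fin d) (Fin d) ℂ,
        P.IsHermitian ∧ P * P = P ∧ P.rank = k ∧ x = ((P * A).trace).re}
      (sk hA.eigenvalues k) := by
  set φ := Unitary.conjStarAlgAut ℂ (Matrix (Fin d) (Fin d) ℂ) hA.eigenvectorUnitary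
  set Λ : Matrix (Fin d) (Fin d) ℂ := diagonal (RCLike.ofReal ∘ hA.eigenvalues)
  have htrace (Q : Matrix (Fin d) (Fin d) ℂ) : (φ Q * A).trace = (Q * Λ).trace := by
    conv_lhs => rw [hA.spectral_theorem, ← map_mul, trace_map']
  refine ⟨?_, ?_⟩
  · obtain ⟨S, rfl, htop⟩ :=
      exists_isTopSet_card_eq hA.eigenvalues (k := k) (by simpa using hkd)
    set D : Matrix (Fin d) (Fin d) ℂ := diagonal fun i => if i ∈ S then 1 else 0
    have hD : D.IsHermitian := isHermitian_diagonal_of_self_adjoint _ (by ext i; simp)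
    have hD2 : IsIdempotentElem D := by
      simp only [D, IsIdempotentElem, diagonal_mul_diagonal, mul_ite, mul_one, mul_zero]
      grind
    refine ⟨φ D, (hD.isSelfAdjoint.map φ).isHermitian, (hD2.map φ).eq, ?_, ?_⟩
    · rw [rank_conjStarAlgAut, rank_diagonal]
      simp [Fintype.card_subtype]
    · rw [htrace, htop.sk_eq]
      simp [D, Λ]
  · rintro x ⟨P, hP, hP2, rfl, rfl⟩
    obtain ⟨Q, rfl⟩ : ∃ Q, P = φ Q := ⟨φ.symm P, (φ.apply_symm_apply P).symm⟩
    have hQ : Q.IsHermitian := by simpa using (hP.isSelfAdjoint.map φ.symm).isHermitian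
    have hQ2 : IsIdempotentElem Q := φ.injective (by rwa [map_mul])
    rw [htrace, rank_conjStarAlgAut]
    exact hQ.re_trace_mul_diagonal_le_sk hQ2 _

/-- Fan's maximum principle: `s_k(A)` is the maximum of `tr(P_W A)` over orthogonal
projections onto `k`-dimensional subspaces. -/
theorem stmt1 {d : ℕ} (A : Matrix (Fin d) (Fin d) ℂ) (hA : A.IsHermitian)
    (k : ℕ) (hk1 : 1 ≤ k) (hkd : k ≤ d) :
    IsGreatest {x : ℝ | ∃ P : Matrix (Fin d) (Fin d) ℂ,
        P.IsHermitian ∧ P * P = P ∧ P.rank = k ∧ x = ((P * A).trace).re}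
      (sk hA.eigenvalues k) :=
  stmt1_general A hA k hkd
end

section
/- Let Δ be the set difference of two downward closed subsets of the product-ordered set [d_B] × [d_C], and let Δ₁ ⊆ [d_B] and Δ₂ ⊆ [d_C] be the projections of Δ onto the first and second coordinates respectively. Then Δ₁ × Δ₂ ⊆ (↓Δ) ∪ (↑Δ). -/
/-- For the difference `Δ = Y \ Y'` of two downward closed subsets of the product order on
`[d_B] × [d_C]`, with coordinate projections `Δ₁`, `Δ₂`, one has `Δ₁ × Δ₂ ⊆ (↓Δ) ∪ (↑Δ)`. -/
theorem stmt9 {dB dC : ℕ} (Y Y' : Set (Fin dB × Fin dC))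
    (hY : IsLowerSet Y) (hY' : IsLowerSet Y') :
    (Prod.fst '' (Y \ Y')) ×ˢ (Prod.snd '' (Y \ Y'))
      ⊆ ↑(lowerClosure (Y \ Y')) ∪ ↑(upperClosure (Y \ Y')) := by
  rintro ⟨b, c⟩ ⟨⟨⟨b1, c1⟩, h1, rfl⟩, ⟨⟨b2, c2⟩, h2, rfl⟩⟩
  rcases le_total c2 c1 with h | h
  · exact Or.inl ⟨⟨b1, c1⟩, h1, le_refl b1, h⟩
  · exact Or.inr ⟨⟨b1, c1⟩, h1, le_refl b1, h⟩
end

section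
/- Let D₁, D₂ be positive semi-definite (or merely self-adjoint) simultaneously diagonal operators on ℂ^d. Then for every k ∈ [d], the optimal value u_k(D₁, D₂) of the linear program maximizing (λ(D₁) ⊕ λ(D₂))ᵀ x over the polyhedron defined by 0 ≤ x^{(1)}_i, x^{(2)}_i ≤ 1, Σ_i x^{(1)}_i = Σ_i x^{(2)}_i = k, and the alignment constraints Σ_{i≤ℓ₁} x^{(1)}_i + Σ_{i≤ℓ₂} x^{(2)}_i ≤ α^{(k)}_{(ℓ₁,ℓ₂)} for all ℓ₁, ℓ₂ ∈ [d], equals s_k(D₁ + D₂), the sum of the k largest eigenvalues of D₁ + D₂. -/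
open Finset

lemma sk_facts {d k : ℕ} (hkd : k ≤ d) (f : Fin d → ℝ) :
    ∃ S : Finset (Fin d), S.card = k ∧ sk f k = ∑ i ∈ S, f i ∧
      ∀ T : Finset (Fin d), T.card = k → ∑ i ∈ T, f i ≤ ∑ i ∈ S, f i := by
  have hd : k ≤ (univ : Finset (Fin d)).card := by simpa using hkd
  obtain ⟨S₀, _, hS₀⟩ := exists_subset_card_eq hd
  have hne : ((univ : Finset (Fin d)).powersetCard k).Nonempty :=
    ⟨S₀, mem_powersetCard.mpr ⟨subset_univ _, hS₀⟩⟩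
  obtain ⟨S, hSmem, hSmax⟩ := exists_max_image _ (fun S => ∑ i ∈ S, f i) hne
  have hScard : S.card = k := (mem_powersetCard.mp hSmem).2
  have hmax : ∀ T : Finset (Fin d), T.card = k → ∑ i ∈ T, f i ≤ ∑ i ∈ S, f i := fun T hT =>
    hSmax T (mem_powersetCard.mpr ⟨subset_univ _, hT⟩)
  refine ⟨S, hScard, ?_, hmax⟩
  have hfin : {x : ℝ | ∃ T : Finset (Fin d), T.card = k ∧ x = ∑ i ∈ T, f i}.Finite := by
    have : {x : ℝ | ∃ T : Finset (Fin d), T.card = k ∧ x = ∑ i ∈ T, f i}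
        = (fun T : Finset (Fin d) => ∑ i ∈ T, f i) '' {T | T.card = k} := by
      ext x
      simp only [Set.mem_setOf_eq, Set.mem_image]
      constructor
      · rintro ⟨T, hT, rfl⟩; exact ⟨T, hT, rfl⟩
      · rintro ⟨T, hT, rfl⟩; exact ⟨T, hT, rfl⟩
    rw [this]
    exact Set.Finite.image _ (Set.toFinite _)
  refine le_antisymm (csSup_le ⟨∑ i ∈ S, f i, S, hScard, rfl⟩ ?_) (le_csSup hfin.bddAbove ⟨S, hScard, rfl⟩)
  rintro x ⟨T, hT, rfl⟩
  exact hmax T hT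

lemma frac_bound {d k : ℕ} (hk1 : 1 ≤ k) (hkd : k ≤ d) (f : Fin d → ℝ) (w : Fin d → ℝ)
    (hw0 : ∀ i, 0 ≤ w i) (hw1 : ∀ i, w i ≤ 1) (hsum : ∑ i, w i = k) :
    ∑ i, w i * f i ≤ sk f k := by
  obtain ⟨S, hScard, hsk, hSmax⟩ := sk_facts hkd f
  have hSne : S.Nonempty := card_pos.mp (by omega)
  obtain ⟨i₀, hi₀S, hi₀min⟩ := S.exists_min_image f hSne
  have hout : ∀ j, j ∉ S → f j ≤ f i₀ := by
    intro j hj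
    by_contra hlt
    push_neg at hlt
    have hjS : j ∉ S.erase i₀ := fun h => hj (erase_subset _ _ h)
    have hcard : (insert j (S.erase i₀)).card = k := by
      rw [card_insert_of_notMem hjS, card_erase_of_mem hi₀S, hScard]; omega
    have herase := sum_erase_add S f hi₀S
    have hsum2 : ∑ i ∈ insert j (S.erase i₀), f i = ∑ i ∈ S, f i - f i₀ + f j := by
      rw [sum_insert hjS]; linarith
    have := hSmax _ hcard
    rw [hsum2] at this
    linarith
  have hsplitf : ∑ i ∈ univ \ S, f i + ∑ i ∈ S, f i = ∑ i, f i := sum_sdiff (subset_univ S)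
  have hsplitwf : ∑ i ∈ univ \ S, w i * f i + ∑ i ∈ S, w i * f i = ∑ i, w i * f i :=
    sum_sdiff (subset_univ S)
  have hsplitw : ∑ i ∈ univ \ S, w i + ∑ i ∈ S, w i = ∑ i, w i := sum_sdiff (subset_univ S)
  have h1 : ∑ i ∈ S, (1 - w i) * f i₀ ≤ ∑ i ∈ S, (1 - w i) * f i :=
    sum_le_sum fun i hi => mul_le_mul_of_nonneg_left (hi₀min i hi) (by linarith [hw1 i])
  have h2 : ∑ i ∈ univ \ S, w i * f i ≤ ∑ i ∈ univ \ S, w i * f i₀ :=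
    sum_le_sum fun i hi => mul_le_mul_of_nonneg_left (hout i (mem_sdiff.mp hi).2) (hw0 i)
  have h3 : ∑ i ∈ S, (1 - w i) * f i₀ = ((k : ℝ) - ∑ i ∈ S, w i) * f i₀ := by
    rw [← sum_mul, sum_sub_distrib, sum_const, hScard]
    simp
  have h4 : ∑ i ∈ univ \ S, w i * f i₀ = ((k : ℝ) - ∑ i ∈ S, w i) * f i₀ := by
    rw [← sum_mul]
    congr 1
    linarith
  have h5 : ∑ i ∈ S, (1 - w i) * f i = ∑ i ∈ S, f i - ∑ i ∈ S, w i * f i := by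
    rw [← sum_sub_distrib]
    congr 1
    ext i
    ring
  rw [hsk]
  linarith


section helpers
variable {ι : Type*} [DecidableEq ι]

lemma card_helper {A A' B B' : Finset ι} {e : ι}
    (hA : A' ⊆ A) (hB : B' ⊆ B) (heA : e ∈ A) (heB : e ∈ B) (heA' : e ∉ A') (heB' : e ∉ B') :
    (A ∩ B').card + (A' ∩ B).card + 1 ≤ (A ∩ B).card + (A' ∩ B').card := by
  have hsub : (A ∩ B') ∪ (A' ∩ B) ⊆ (A ∩ B).erase e := by
    intro x hx
    rw [mem_union] at hx
    rcases hx with hx | hx <;> rw [mem_inter] at hx <;> rw [mem_erase, mem_inter]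
    · exact ⟨fun h => heB' (h ▸ hx.2), hx.1, hB hx.2⟩
    · exact ⟨fun h => heA' (h ▸ hx.1), hA hx.1, hx.2⟩
  have hint : (A ∩ B') ∩ (A' ∩ B) = A' ∩ B' := by
    ext x
    simp only [mem_inter]
    exact ⟨fun h => ⟨h.2.1, h.1.2⟩, fun h => ⟨⟨hA h.1, h.2⟩, ⟨h.1, hB h.2⟩⟩⟩
  have h1 : ((A ∩ B') ∪ (A' ∩ B)).card + ((A ∩ B') ∩ (A' ∩ B)).card
      = (A ∩ B').card + (A' ∩ B).card := card_union_add_card_inter _ _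
  have h2 : ((A ∩ B') ∪ (A' ∩ B)).card ≤ ((A ∩ B).erase e).card := card_le_card hsub
  have h3 : ((A ∩ B).erase e).card = (A ∩ B).card - 1 := card_erase_of_mem (mem_inter.mpr ⟨heA, heB⟩)
  have h4 : 1 ≤ (A ∩ B).card := card_pos.mpr ⟨e, mem_inter.mpr ⟨heA, heB⟩⟩
  rw [hint] at h1
  omega

/-- prefix set w.r.t. a rank function -/
def Cset (E : Finset ι) (r : ι → ℕ) (m : ℕ) : Finset ι := E.filter fun x => r x ≤ m

lemma mem_Cset {E : Finset ι} {r : ι → ℕ} {m : ℕ} {x : ι} :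
    x ∈ Cset E r m ↔ x ∈ E ∧ r x ≤ m := mem_filter

lemma Cset_subset {E : Finset ι} {r : ι → ℕ} {m : ℕ} : Cset E r m ⊆ E := filter_subset _ _

lemma Cset_mono {E : Finset ι} {r : ι → ℕ} {m m' : ℕ} (h : m ≤ m') :
    Cset E r m ⊆ Cset E r m' := by
  intro x hx; rw [mem_Cset] at *; exact ⟨hx.1, hx.2.trans h⟩

lemma Cset_erase {E : Finset ι} {r : ι → ℕ} {m : ℕ} {e : ι} :
    Cset (E.erase e) r m = (Cset E r m).erase e := by
  ext x; simp only [mem_Cset, mem_erase]; tauto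

lemma erase_inter_erase {X Y : Finset ι} {e : ι} :
    (X.erase e) ∩ (Y.erase e) = (X ∩ Y).erase e := by
  ext x; simp only [mem_inter, mem_erase]; tauto

lemma card_erase_real {X : Finset ι} {e : ι} (h : e ∈ X) :
    (((X.erase e).card : ℝ)) = (X.card : ℝ) - 1 := by
  rw [card_erase_of_mem h, Nat.cast_sub (card_pos.mpr ⟨e, h⟩)]
  norm_num

lemma lemW : ∀ (n : ℕ) (E : Finset ι), E.card = n → ∀ (r₁ r₂ : ι → ℕ) (K : ℝ) (P Q : ℕ → ℝ),
    0 ≤ K → K ≤ (n : ℝ) →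
    (∀ m, P m ≤ ((Cset E r₁ m).card : ℝ)) →
    (∀ m, Q m ≤ ((Cset E r₂ m).card : ℝ)) →
    (∀ m, P m ≤ K) → (∀ m, Q m ≤ K) →
    (∀ m n', P m + Q n' ≤ K + (((Cset E r₁ m) ∩ (Cset E r₂ n')).card : ℝ)) →
    ∃ w : ι → ℝ, (∀ x ∈ E, 0 ≤ w x ∧ w x ≤ 1) ∧ (∑ x ∈ E, w x = K) ∧
      (∀ m, P m ≤ ∑ x ∈ Cset E r₁ m, w x) ∧
      (∀ m, Q m ≤ ∑ x ∈ Cset E r₂ m, w x) := by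
  intro n
  induction n with
  | zero =>
      intro E hE r₁ r₂ K P Q hK0 hK1 hA hB hPK hQK hC
      have hEe : E = ∅ := card_eq_zero.mp hE
      subst hEe
      have hK : K = 0 := le_antisymm (by exact_mod_cast hK1) hK0
      refine ⟨fun _ => 0, by simp, by simp [hK], ?_, ?_⟩
      · intro m
        have := hA m
        simp only [Cset, filter_empty, card_empty, Nat.cast_zero] at this
        simp only [Cset, filter_empty, sum_empty]
        exact this
      · intro m
        have := hB m
        simp only [Cset, filter_empty, card_empty, Nat.cast_zero] at this
        simp only [Cset, filter_empty, sum_empty]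
        exact this
  | succ n IH =>
      intro E hE r₁ r₂ K P Q hK0 hK1 hA hB hPK hQK hC
      have hne : E.Nonempty := card_pos.mp (by omega)
      obtain ⟨e, heE, hmax⟩ := E.exists_max_image r₁ hne
      set a := r₁ e with ha
      set b := r₂ e with hb
      have heCa : ∀ m, a ≤ m → e ∈ Cset E r₁ m := fun m hm => mem_Cset.mpr ⟨heE, hm⟩
      have heCa' : ∀ m, m < a → e ∉ Cset E r₁ m := by
        intro m hm h; have := (mem_Cset.mp h).2; omega
      have heDb : ∀ m, b ≤ m → e ∈ Cset E r₂ m := fun m hm => mem_Cset.mpr ⟨heE, hm⟩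
      have heDb' : ∀ m, m < b → e ∉ Cset E r₂ m := by
        intro m hm h; have := (mem_Cset.mp h).2; omega
      have hsubC : ∀ m, m < a → Cset E r₁ m ⊆ E.erase e := by
        intro m hm x hx
        rw [mem_erase]
        refine ⟨fun hxe => heCa' m hm (hxe ▸ hx), (mem_Cset.mp hx).1⟩
      have hsubD : ∀ m, m < b → Cset E r₂ m ⊆ E.erase e := by
        intro m hm x hx
        rw [mem_erase]
        refine ⟨fun hxe => heDb' m hm (hxe ▸ hx), (mem_Cset.mp hx).1⟩
      have hcardE' : (E.erase e).card = n := by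
        rw [card_erase_of_mem heE, hE]; omega
      -- the reduction amount t
      set U : ℕ → ℕ → ℝ :=
        fun m n' => K + (((Cset E r₁ m) ∩ (Cset E r₂ n')).card : ℝ) - P m - Q n' with hU
      set g : ℕ × ℕ → ℝ := fun p =>
        if p.1 = a then (if p.2 = b then min 1 K else K - Q p.2)
        else (if p.2 = b then K - P p.1 else U p.1 p.2) with hg
      have hSne : ((range (a+1)) ×ˢ (range (b+1))).Nonempty := ⟨(a, b), by simp⟩
      set t := ((range (a+1)) ×ˢ (range (b+1))).inf' hSne g with ht
      have hmem : ∀ m n', m ≤ a → n' ≤ b → (m, n') ∈ (range (a+1)) ×ˢ (range (b+1)) := by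
        intro m n' hm hn'; rw [Finset.mem_product, mem_range, mem_range]; omega
      have hgab : g (a, b) = min 1 K := by simp [hg]
      have ht1 : t ≤ 1 := by
        have h := inf'_le g (hmem a b le_rfl le_rfl)
        rw [hgab] at h
        exact h.trans (min_le_left _ _)
      have htK : t ≤ K := by
        have h := inf'_le g (hmem a b le_rfl le_rfl)
        rw [hgab] at h; exact h.trans (min_le_right _ _)
      have htP : ∀ m, m < a → t ≤ K - P m := by
        intro m hm
        have h := inf'_le g (hmem m b hm.le le_rfl)
        rwa [show g (m, b) = K - P m from by simp [hg, Nat.ne_of_lt hm]] at h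
      have htQ : ∀ n', n' < b → t ≤ K - Q n' := by
        intro n' hn'
        have h := inf'_le g (hmem a n' le_rfl hn'.le)
        rwa [show g (a, n') = K - Q n' from by simp [hg, Nat.ne_of_lt hn']] at h
      have htU : ∀ m n', m < a → n' < b → t ≤ U m n' := by
        intro m n' hm hn'
        have h := inf'_le g (hmem m n' hm.le hn'.le)
        rwa [show g (m, n') = U m n' from by simp [hg, Nat.ne_of_lt hm, Nat.ne_of_lt hn']] at h
      -- generic lower bound principle
      have hlow : ∀ (L : ℝ),
          (L ≤ min 1 K) →
          (∀ n', n' < b → L ≤ K - Q n') →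
          (∀ m, m < a → L ≤ K - P m) →
          (∀ m n', m < a → n' < b → L ≤ U m n') → L ≤ t := by
        intro L h1 h2 h3 h4
        apply le_inf' hSne
        rintro ⟨m, n'⟩ hp
        rw [Finset.mem_product, mem_range, mem_range] at hp
        rcases eq_or_lt_of_le (Nat.lt_succ_iff.mp hp.1) with hm | hm <;>
          rcases eq_or_lt_of_le (Nat.lt_succ_iff.mp hp.2) with hn | hn
        · subst hm; subst hn; simpa [hg] using h1
        · subst hm; simpa [hg, Nat.ne_of_lt hn] using h2 n' hn
        · subst hn; simpa [hg, Nat.ne_of_lt hm] using h3 m hm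
        · simpa [hg, Nat.ne_of_lt hm, Nat.ne_of_lt hn] using h4 m n' hm hn
      -- lower bounds on t
      have ht0 : (0:ℝ) ≤ t := by
        apply hlow
        · exact le_min zero_le_one hK0
        · intro n' _; linarith [hQK n']
        · intro m _; linarith [hPK m]
        · intro m n' _ _
          have h1 := hC m n'
          have h2 : (0:ℝ) ≤ (((Cset E r₁ m) ∩ (Cset E r₂ n')).card : ℝ) := Nat.cast_nonneg _
          simp only [hU]; linarith
      have htKn : K - (n:ℝ) ≤ t := by
        apply hlow
        · refine le_min ?_ (by linarith [Nat.cast_nonneg (α := ℝ) n])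
          have h : K ≤ ((n+1 : ℕ) : ℝ) := hK1
          push_cast at h
          linarith
        · intro n' hn'
          have h1 := hB n'
          have h2 : ((Cset E r₂ n').card : ℝ) ≤ (n:ℝ) :=
            Nat.cast_le.mpr (by rw [← hcardE']; exact card_le_card (hsubD n' hn'))
          linarith
        · intro m hm
          have h1 := hA m
          have h2 : ((Cset E r₁ m).card : ℝ) ≤ (n:ℝ) :=
            Nat.cast_le.mpr (by rw [← hcardE']; exact card_le_card (hsubC m hm))
          linarith
        · intro m n' hm hn'
          have h1 := hA m
          have h2 := hB n'
          have h3 := card_union_add_card_inter (Cset E r₁ m) (Cset E r₂ n')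
          have h4 : ((Cset E r₁ m) ∪ (Cset E r₂ n')).card ≤ n := by
            rw [← hcardE']
            exact card_le_card (union_subset (hsubC m hm) (hsubD n' hn'))
          have h3' : (((Cset E r₁ m) ∪ (Cset E r₂ n')).card : ℝ)
              + (((Cset E r₁ m) ∩ (Cset E r₂ n')).card : ℝ)
              = ((Cset E r₁ m).card : ℝ) + ((Cset E r₂ n').card : ℝ) := by exact_mod_cast h3
          have h4' : (((Cset E r₁ m) ∪ (Cset E r₂ n')).card : ℝ) ≤ (n:ℝ) := Nat.cast_le.mpr h4
          simp only [hU]; linarith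
      have htA : ∀ m, a ≤ m → P m - ((Cset E r₁ m).card : ℝ) + 1 ≤ t := by
        intro m ham
        have hcm : (1:ℝ) ≤ ((Cset E r₁ m).card : ℝ) := by
          exact_mod_cast card_pos.mpr ⟨e, heCa m ham⟩
        apply hlow
        · exact le_min (by linarith [hA m]) (by linarith [hPK m])
        · intro n' hn'
          have h1 := hC m n'
          have h2 : ((Cset E r₁ m ∩ Cset E r₂ n').card : ℝ) ≤ ((Cset E r₁ m).card : ℝ) - 1 := by
            rw [← card_erase_real (heCa m ham)]
            refine Nat.cast_le.mpr (card_le_card ?_)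
            intro x hx
            rw [mem_erase]
            rw [mem_inter] at hx
            exact ⟨fun hxe => heDb' n' hn' (hxe ▸ hx.2), hx.1⟩
          linarith
        · intro m' hm'
          have h1 := hA m'
          have h2 : ((Cset E r₁ m').card : ℝ) ≤ ((Cset E r₁ m).card : ℝ) - 1 := by
            rw [← card_erase_real (heCa m ham)]
            refine Nat.cast_le.mpr (card_le_card ?_)
            intro x hx
            rw [mem_erase]
            exact ⟨fun hxe => heCa' m' hm' (hxe ▸ hx), Cset_mono (le_trans hm'.le ham) hx⟩
          linarith [hPK m]
        · intro m' n' hm' hn'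
          have h1 := hC m n'
          have h2 := hA m'
          have h3 := card_helper (A := Cset E r₁ m) (B := E) (A' := Cset E r₁ m')
            (B' := Cset E r₂ n')
            (Cset_mono (le_trans hm'.le ham)) Cset_subset (heCa m ham) heE
            (heCa' m' hm') (heDb' n' hn')
          have e1 : Cset E r₁ m' ∩ E = Cset E r₁ m' := inter_eq_left.mpr Cset_subset
          have e2 : Cset E r₁ m ∩ E = Cset E r₁ m := inter_eq_left.mpr Cset_subset
          rw [e1, e2] at h3
          have h3' : ((Cset E r₁ m ∩ Cset E r₂ n').card : ℝ) + ((Cset E r₁ m').card : ℝ) + 1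
              ≤ ((Cset E r₁ m).card : ℝ) + ((Cset E r₁ m' ∩ Cset E r₂ n').card : ℝ) := by
            exact_mod_cast h3
          simp only [hU]; linarith
      have htB : ∀ n', b ≤ n' → Q n' - ((Cset E r₂ n').card : ℝ) + 1 ≤ t := by
        intro n' hbn
        have hcm : (1:ℝ) ≤ ((Cset E r₂ n').card : ℝ) := by
          exact_mod_cast card_pos.mpr ⟨e, heDb n' hbn⟩
        apply hlow
        · exact le_min (by linarith [hB n']) (by linarith [hQK n'])
        · intro n'' hn''
          have h1 := hB n''
          have h2 : ((Cset E r₂ n'').card : ℝ) ≤ ((Cset E r₂ n').card : ℝ) - 1 := by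
            rw [← card_erase_real (heDb n' hbn)]
            refine Nat.cast_le.mpr (card_le_card ?_)
            intro x hx
            rw [mem_erase]
            exact ⟨fun hxe => heDb' n'' hn'' (hxe ▸ hx), Cset_mono (le_trans hn''.le hbn) hx⟩
          linarith [hQK n']
        · intro m' hm'
          have h1 := hC m' n'
          have h2 : ((Cset E r₁ m' ∩ Cset E r₂ n').card : ℝ) ≤ ((Cset E r₂ n').card : ℝ) - 1 := by
            rw [← card_erase_real (heDb n' hbn)]
            refine Nat.cast_le.mpr (card_le_card ?_)
            intro x hx
            rw [mem_erase]
            rw [mem_inter] at hx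
            exact ⟨fun hxe => heCa' m' hm' (hxe ▸ hx.1), hx.2⟩
          linarith
        · intro m' n'' hm' hn''
          have h1 := hC m' n'
          have h2 := hB n''
          have h3 := card_helper (A := Cset E r₂ n') (B := E) (A' := Cset E r₂ n'')
            (B' := Cset E r₁ m')
            (Cset_mono (le_trans hn''.le hbn)) Cset_subset (heDb n' hbn) heE
            (heDb' n'' hn'') (heCa' m' hm')
          have e1 : Cset E r₂ n'' ∩ E = Cset E r₂ n'' := inter_eq_left.mpr Cset_subset
          have e2 : Cset E r₂ n' ∩ E = Cset E r₂ n' := inter_eq_left.mpr Cset_subset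
          rw [e1, e2] at h3
          have h3' : ((Cset E r₂ n' ∩ Cset E r₁ m').card : ℝ) + ((Cset E r₂ n'').card : ℝ) + 1
              ≤ ((Cset E r₂ n').card : ℝ) + ((Cset E r₂ n'' ∩ Cset E r₁ m').card : ℝ) := by
            exact_mod_cast h3
          have e3 : Cset E r₂ n' ∩ Cset E r₁ m' = Cset E r₁ m' ∩ Cset E r₂ n' := inter_comm _ _
          have e4 : Cset E r₂ n'' ∩ Cset E r₁ m' = Cset E r₁ m' ∩ Cset E r₂ n'' := inter_comm _ _
          rw [e3, e4] at h3'
          simp only [hU]; linarith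
      have ht2 : ∀ m n', a ≤ m → b ≤ n' →
          P m + Q n' - K - ((Cset E r₁ m ∩ Cset E r₂ n').card : ℝ) + 1 ≤ t := by
        intro m n' ham hbn
        have hein : e ∈ Cset E r₁ m ∩ Cset E r₂ n' := mem_inter.mpr ⟨heCa m ham, heDb n' hbn⟩
        have hcd1 : (1:ℝ) ≤ ((Cset E r₁ m ∩ Cset E r₂ n').card : ℝ) := by
          exact_mod_cast card_pos.mpr ⟨e, hein⟩
        apply hlow
        · exact le_min (by linarith [hC m n']) (by linarith [hPK m, hQK n'])
        · intro n'' hn''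
          have h1 := hC m n''
          have h2 : ((Cset E r₁ m ∩ Cset E r₂ n'').card : ℝ)
              ≤ ((Cset E r₁ m ∩ Cset E r₂ n').card : ℝ) - 1 := by
            rw [← card_erase_real hein]
            refine Nat.cast_le.mpr (card_le_card ?_)
            intro x hx
            rw [mem_erase]
            rw [mem_inter] at hx
            refine ⟨fun hxe => heDb' n'' hn'' (hxe ▸ hx.2), mem_inter.mpr ⟨hx.1, Cset_mono (le_trans hn''.le hbn) hx.2⟩⟩
          linarith [hQK n']
        · intro m' hm'
          have h1 := hC m' n'
          have h2 : ((Cset E r₁ m' ∩ Cset E r₂ n').card : ℝ)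
              ≤ ((Cset E r₁ m ∩ Cset E r₂ n').card : ℝ) - 1 := by
            rw [← card_erase_real hein]
            refine Nat.cast_le.mpr (card_le_card ?_)
            intro x hx
            rw [mem_erase]
            rw [mem_inter] at hx
            refine ⟨fun hxe => heCa' m' hm' (hxe ▸ hx.1), mem_inter.mpr ⟨Cset_mono (le_trans hm'.le ham) hx.1, hx.2⟩⟩
          linarith [hPK m]
        · intro m' n'' hm' hn''
          have h1 := hC m n''
          have h2 := hC m' n'
          have h3 := card_helper (A := Cset E r₁ m) (B := Cset E r₂ n')
            (A' := Cset E r₁ m') (B' := Cset E r₂ n'')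
            (Cset_mono (le_trans hm'.le ham)) (Cset_mono (le_trans hn''.le hbn))
            (heCa m ham) (heDb n' hbn) (heCa' m' hm') (heDb' n'' hn'')
          have h3' : ((Cset E r₁ m ∩ Cset E r₂ n'').card : ℝ)
              + ((Cset E r₁ m' ∩ Cset E r₂ n').card : ℝ) + 1
              ≤ ((Cset E r₁ m ∩ Cset E r₂ n').card : ℝ)
              + ((Cset E r₁ m' ∩ Cset E r₂ n'').card : ℝ) := by exact_mod_cast h3
          simp only [hU]; linarith
      -- set up the smaller instance
      set P' : ℕ → ℝ := fun m => if a ≤ m then P m - t else P m with hP'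
      set Q' : ℕ → ℝ := fun m => if b ≤ m then Q m - t else Q m with hQ'
      have hA' : ∀ m, P' m ≤ ((Cset (E.erase e) r₁ m).card : ℝ) := by
        intro m
        rw [Cset_erase]
        by_cases ham : a ≤ m
        · simp only [hP']
          rw [if_pos ham, card_erase_real (heCa m ham)]
          linarith [htA m ham]
        · simp only [hP']
          rw [if_neg ham, erase_eq_of_notMem (heCa' m (by omega))]
          exact hA m
      have hB' : ∀ m, Q' m ≤ ((Cset (E.erase e) r₂ m).card : ℝ) := by
        intro m
        rw [Cset_erase]
        by_cases hbm : b ≤ m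
        · simp only [hQ']
          rw [if_pos hbm, card_erase_real (heDb m hbm)]
          linarith [htB m hbm]
        · simp only [hQ']
          rw [if_neg hbm, erase_eq_of_notMem (heDb' m (by omega))]
          exact hB m
      have hPK' : ∀ m, P' m ≤ K - t := by
        intro m
        by_cases ham : a ≤ m
        · simp only [hP']; rw [if_pos ham]; linarith [hPK m]
        · simp only [hP']; rw [if_neg ham]; linarith [htP m (by omega : m < a)]
      have hQK' : ∀ m, Q' m ≤ K - t := by
        intro m
        by_cases hbm : b ≤ m
        · simp only [hQ']; rw [if_pos hbm]; linarith [hQK m]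
        · simp only [hQ']; rw [if_neg hbm]; linarith [htQ m (by omega : m < b)]
      have hC' : ∀ m n', P' m + Q' n'
          ≤ (K - t) + ((Cset (E.erase e) r₁ m ∩ Cset (E.erase e) r₂ n').card : ℝ) := by
        intro m n'
        rw [Cset_erase, Cset_erase, erase_inter_erase]
        by_cases ham : a ≤ m <;> by_cases hbn : b ≤ n'
        · have hein : e ∈ Cset E r₁ m ∩ Cset E r₂ n' :=
            mem_inter.mpr ⟨heCa m ham, heDb n' hbn⟩
          simp only [hP', hQ']
          rw [if_pos ham, if_pos hbn, card_erase_real hein]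
          linarith [ht2 m n' ham hbn]
        · have hnotin : e ∉ Cset E r₁ m ∩ Cset E r₂ n' :=
            fun h => heDb' n' (by omega) (mem_inter.mp h).2
          simp only [hP', hQ']
          rw [if_pos ham, if_neg hbn, erase_eq_of_notMem hnotin]
          linarith [hC m n']
        · have hnotin : e ∉ Cset E r₁ m ∩ Cset E r₂ n' :=
            fun h => heCa' m (by omega) (mem_inter.mp h).1
          simp only [hP', hQ']
          rw [if_neg ham, if_pos hbn, erase_eq_of_notMem hnotin]
          linarith [hC m n']
        · have hnotin : e ∉ Cset E r₁ m ∩ Cset E r₂ n' :=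
            fun h => heCa' m (by omega) (mem_inter.mp h).1
          simp only [hP', hQ']
          rw [if_neg ham, if_neg hbn, erase_eq_of_notMem hnotin]
          have := htU m n' (by omega) (by omega)
          simp only [hU] at this
          linarith
      obtain ⟨w', hw'box, hw'sum, hw'A, hw'B⟩ :=
        IH (E.erase e) hcardE' r₁ r₂ (K - t) P' Q' (by linarith) (by linarith) hA' hB' hPK' hQK' hC'
      refine ⟨fun x => if x = e then t else w' x, ?_, ?_, ?_, ?_⟩
      · intro x hx
        by_cases hxe : x = e
        · subst hxe; simp only [if_pos rfl]; exact ⟨ht0, ht1⟩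
        · simp only [if_neg hxe]; exact hw'box x (mem_erase.mpr ⟨hxe, hx⟩)
      · have hcong : ∑ x ∈ E.erase e, (if x = e then t else w' x) = ∑ x ∈ E.erase e, w' x :=
          sum_congr rfl fun x hx => if_neg (mem_erase.mp hx).1
        have hsplit : ∑ x ∈ E.erase e, (if x = e then t else w' x) + (if e = e then t else w' e)
            = ∑ x ∈ E, (if x = e then t else w' x) := sum_erase_add E _ heE
        rw [show (if e = e then t else w' e) = t from if_pos rfl] at hsplit
        rw [← hsplit, hcong, hw'sum]
        ring
      · intro m
        by_cases ham : a ≤ m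
        · have hin := heCa m ham
          have hcong : ∑ x ∈ (Cset E r₁ m).erase e, (if x = e then t else w' x)
              = ∑ x ∈ Cset (E.erase e) r₁ m, w' x := by
            rw [Cset_erase]
            exact sum_congr rfl fun x hx => if_neg (mem_erase.mp hx).1
          have hsplit : ∑ x ∈ (Cset E r₁ m).erase e, (if x = e then t else w' x)
              + (if e = e then t else w' e)
              = ∑ x ∈ Cset E r₁ m, (if x = e then t else w' x) := sum_erase_add _ _ hin
          rw [show (if e = e then t else w' e) = t from if_pos rfl] at hsplit
          rw [← hsplit, hcong]
          have h := hw'A m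
          simp only [hP'] at h
          rw [if_pos ham] at h
          linarith
        · have hnotin := heCa' m (by omega)
          have hcong : ∑ x ∈ Cset E r₁ m, (if x = e then t else w' x)
              = ∑ x ∈ Cset (E.erase e) r₁ m, w' x := by
            rw [Cset_erase, erase_eq_of_notMem hnotin]
            exact sum_congr rfl fun x hx => if_neg (fun (hxe : _ = e) => hnotin (hxe ▸ hx))
          rw [hcong]
          have h := hw'A m
          simp only [hP'] at h
          rw [if_neg ham] at h
          exact h
      · intro m
        by_cases hbm : b ≤ m
        · have hin := heDb m hbm
          have hcong : ∑ x ∈ (Cset E r₂ m).erase e, (if x = e then t else w' x)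
              = ∑ x ∈ Cset (E.erase e) r₂ m, w' x := by
            rw [Cset_erase]
            exact sum_congr rfl fun x hx => if_neg (mem_erase.mp hx).1
          have hsplit : ∑ x ∈ (Cset E r₂ m).erase e, (if x = e then t else w' x)
              + (if e = e then t else w' e)
              = ∑ x ∈ Cset E r₂ m, (if x = e then t else w' x) := sum_erase_add _ _ hin
          rw [show (if e = e then t else w' e) = t from if_pos rfl] at hsplit
          rw [← hsplit, hcong]
          have h := hw'B m
          simp only [hQ'] at h
          rw [if_pos hbm] at h
          linarith
        · have hnotin := heDb' m (by omega)
          have hcong : ∑ x ∈ Cset E r₂ m, (if x = e then t else w' x)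
              = ∑ x ∈ Cset (E.erase e) r₂ m, w' x := by
            rw [Cset_erase, erase_eq_of_notMem hnotin]
            exact sum_congr rfl fun x hx => if_neg (fun (hxe : _ = e) => hnotin (hxe ▸ hx))
          rw [hcong]
          have h := hw'B m
          simp only [hQ'] at h
          rw [if_neg hbm] at h
          exact h


lemma abel_nonneg (n : ℕ) (A g : ℕ → ℝ) (hmono : ∀ i, i + 1 < n → A (i+1) ≤ A i)
    (hpre : ∀ m, m < n → 0 ≤ ∑ i ∈ range (m+1), g i)
    (htot : ∑ i ∈ range n, g i = 0) :
    0 ≤ ∑ i ∈ range n, A i * g i := by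
  rcases Nat.eq_zero_or_pos n with hn | hn
  · subst hn; simp
  have hby : ∑ i ∈ range n, A i * g i
      = A (n-1) * ∑ i ∈ range n, g i
        - ∑ i ∈ range (n-1), (A (i+1) - A i) * ∑ j ∈ range (i+1), g j := by
    simpa [smul_eq_mul] using Finset.sum_range_by_parts A g n
  rw [htot, mul_zero, zero_sub] at hby
  rw [hby, neg_nonneg]
  apply sum_nonpos
  intro i hi
  rw [mem_range] at hi
  have h1 : i + 1 < n := by omega
  have h2 : i < n := by omega
  exact mul_nonpos_iff.mpr (Or.inr ⟨by linarith [hmono i h1], hpre i h2⟩)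

lemma range_sum_eq_fin_sum {d : ℕ} (F : Fin d → ℝ) :
    ∑ i ∈ range d, (if h : i < d then F ⟨i, h⟩ else 0) = ∑ i, F i := by
  rw [← Fin.sum_univ_eq_sum_range (fun i => if h : i < d then F ⟨i, h⟩ else 0) d]
  apply sum_congr rfl
  intro i _
  simp [i.isLt]

lemma prefix_sum_eq_filter {d : ℕ} (F : Fin d → ℝ) {m : ℕ} (hm : m < d) :
    ∑ i ∈ range (m+1), (if h : i < d then F ⟨i, h⟩ else 0)
      = ∑ i ∈ Finset.univ.filter (fun i : Fin d => (i : ℕ) ≤ m), F i := by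
  have hsub : range (m+1) ⊆ range d := by
    intro x hx
    rw [mem_range] at hx ⊢
    omega
  have step1 : ∑ i ∈ range (m+1), (if h : i < d then F ⟨i, h⟩ else 0)
      = ∑ i ∈ range d, (if i ≤ m then (if h : i < d then F ⟨i, h⟩ else 0) else 0) := by
    have e1 : ∑ i ∈ range (m+1), (if h : i < d then F ⟨i, h⟩ else 0)
        = ∑ i ∈ range (m+1), (if i ≤ m then (if h : i < d then F ⟨i, h⟩ else 0) else 0) := by
      apply sum_congr rfl
      intro i hi
      rw [mem_range] at hi
      rw [if_pos (by omega : i ≤ m)]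
    rw [e1]
    apply sum_subset hsub
    intro i _ hi
    rw [mem_range] at hi
    rw [if_neg (by omega : ¬ i ≤ m)]
  have step2 : ∑ i ∈ range d, (if i ≤ m then (if h : i < d then F ⟨i, h⟩ else 0) else 0)
      = ∑ a : Fin d, (if (a : ℕ) ≤ m then (if h : (a : ℕ) < d then F ⟨(a : ℕ), h⟩ else 0) else 0) :=
    (Fin.sum_univ_eq_sum_range
      (fun i => if i ≤ m then (if h : i < d then F ⟨i, h⟩ else 0) else 0) d).symm
  have step3 : ∑ a : Fin d, (if (a : ℕ) ≤ m then (if h : (a : ℕ) < d then F ⟨(a : ℕ), h⟩ else 0) else 0)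
      = ∑ a : Fin d, (if (a : ℕ) ≤ m then F a else 0) := by
    apply sum_congr rfl
    intro a _
    by_cases h : (a : ℕ) ≤ m
    · rw [if_pos h, if_pos h, dif_pos a.isLt]
    · rw [if_neg h, if_neg h]
  rw [step1, step2, step3, sum_filter]

lemma antitone_dominate {d : ℕ} (μ : Fin d → ℝ) (hμ : Antitone μ) (x u : Fin d → ℝ)
    (hpre : ∀ m : ℕ, m < d → ∑ i ∈ Finset.univ.filter (fun i : Fin d => (i:ℕ) ≤ m), x i
        ≤ ∑ i ∈ Finset.univ.filter (fun i : Fin d => (i:ℕ) ≤ m), u i)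
    (htot : ∑ i, x i = ∑ i, u i) :
    ∑ i, μ i * x i ≤ ∑ i, μ i * u i := by
  set A : ℕ → ℝ := fun i => if h : i < d then μ ⟨i, h⟩ else 0 with hA
  set g : ℕ → ℝ := fun i => if h : i < d then u ⟨i, h⟩ - x ⟨i, h⟩ else 0 with hg
  have key : 0 ≤ ∑ i ∈ range d, A i * g i := by
    apply abel_nonneg
    · intro i hi
      simp only [hA]
      rw [dif_pos hi, dif_pos (by omega : i < d)]
      exact hμ (by simp [Fin.le_def])
    · intro m hm
      have := prefix_sum_eq_filter (fun i => u i - x i) hm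
      simp only [hg]
      rw [this, sum_sub_distrib]
      linarith [hpre m hm]
    · have := range_sum_eq_fin_sum (fun i => u i - x i)
      simp only [hg]
      rw [this, sum_sub_distrib]
      linarith
  have heq : ∑ i ∈ range d, A i * g i = ∑ i, (μ i * u i - μ i * x i) := by
    rw [← range_sum_eq_fin_sum (fun i => μ i * u i - μ i * x i)]
    apply sum_congr rfl
    intro i hi
    rw [mem_range] at hi
    simp only [hA, hg]
    rw [dif_pos hi, dif_pos hi, dif_pos hi]
    ring
  rw [heq, sum_sub_distrib] at key
  linarith


lemma card_filter_perm {d : ℕ} (σ : Equiv.Perm (Fin d)) (m : ℕ) :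
    (univ.filter fun i : Fin d => (σ i : ℕ) ≤ m).card
      = (univ.filter fun i : Fin d => (i : ℕ) ≤ m).card := by
  apply card_bij' (fun i _ => σ i) (fun j _ => σ.symm j)
  · intro a ha
    rw [mem_filter] at ha ⊢
    exact ⟨mem_univ _, ha.2⟩
  · intro a ha
    rw [mem_filter] at ha ⊢
    refine ⟨mem_univ _, ?_⟩
    rw [Equiv.apply_symm_apply]
    exact ha.2
  · intro a _; exact Equiv.symm_apply_apply σ a
  · intro a _; exact Equiv.apply_symm_apply σ a

lemma sum_filter_perm {d : ℕ} (σ : Equiv.Perm (Fin d)) (m : ℕ) (w : Fin d → ℝ) :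
    ∑ i ∈ univ.filter (fun i : Fin d => (σ i : ℕ) ≤ m), w i
      = ∑ j ∈ univ.filter (fun j : Fin d => (j : ℕ) ≤ m), w (σ.symm j) := by
  apply sum_bij' (fun i _ => σ i) (fun j _ => σ.symm j)
  · intro a ha
    rw [mem_filter] at ha ⊢
    exact ⟨mem_univ _, ha.2⟩
  · intro a ha
    rw [mem_filter] at ha ⊢
    refine ⟨mem_univ _, ?_⟩
    rw [Equiv.apply_symm_apply]
    exact ha.2
  · intro a _; exact Equiv.symm_apply_apply σ a
  · intro a _; exact Equiv.apply_symm_apply σ a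
  · intro a _
    rw [Equiv.symm_apply_apply]

lemma sum_comp_symm {d : ℕ} (σ : Equiv.Perm (Fin d)) (μ w : Fin d → ℝ) :
    ∑ i, μ i * w (σ.symm i) = ∑ x, μ (σ x) * w x := by
  rw [← Equiv.sum_comp σ (fun i => μ i * w (σ.symm i))]
  apply sum_congr rfl
  intro x _
  rw [Equiv.symm_apply_apply]

/-- Tightness for simultaneously diagonal operators: `D₁, D₂` have diagonal entries
`i ↦ μ(σ i)` and `i ↦ ν(τ i)` with `μ, ν` the decreasing spectra and `σ, τ` permutations, so
`Ω¹_ℓ = {i | σ i < ℓ}` and `Ω²_ℓ = {i | τ i < ℓ}`.  The optimal value of the linear program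
with the basic and alignment constraints (alignment terms
`α^{(k)}_{(ℓ₁,ℓ₂)} = min(k,|Ω¹_{ℓ₁} ∩ Ω²_{ℓ₂}|) + min(k,|Ω¹_{ℓ₁} ∪ Ω²_{ℓ₂}|)`)
equals `s_k(D₁ + D₂)`. -/
theorem stmt16 (d k : ℕ) (hk1 : 1 ≤ k) (hkd : k ≤ d)
    (μ ν : Fin d → ℝ) (hμ : Antitone μ) (hν : Antitone ν)
    (σ τ : Equiv.Perm (Fin d)) :
    IsGreatest
      {val : ℝ | ∃ x1 x2 : Fin d → ℝ,
        (∀ i, 0 ≤ x1 i ∧ x1 i ≤ 1 ∧ 0 ≤ x2 i ∧ x2 i ≤ 1) ∧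
        (∑ i, x1 i = k) ∧ (∑ i, x2 i = k) ∧
        (∀ ℓ₁ ℓ₂ : Fin d,
          ∑ i ∈ Finset.univ.filter (fun i : Fin d => (i : ℕ) ≤ (ℓ₁ : ℕ)), x1 i
            + ∑ i ∈ Finset.univ.filter (fun i : Fin d => (i : ℕ) ≤ (ℓ₂ : ℕ)), x2 i
          ≤ (min k ((Finset.univ.filter fun i : Fin d => (σ i : ℕ) ≤ (ℓ₁ : ℕ)) ∩
                (Finset.univ.filter fun i : Fin d => (τ i : ℕ) ≤ (ℓ₂ : ℕ))).card : ℝ)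
            + (min k ((Finset.univ.filter fun i : Fin d => (σ i : ℕ) ≤ (ℓ₁ : ℕ)) ∪
                (Finset.univ.filter fun i : Fin d => (τ i : ℕ) ≤ (ℓ₂ : ℕ))).card : ℝ)) ∧
        val = ∑ i, μ i * x1 i + ∑ i, ν i * x2 i}
      (sk (fun i => μ (σ i) + ν (τ i)) k) := by
  constructor
  · -- membership: the optimal integral symmetric solution
    obtain ⟨S, hScard, hsk, hSmax⟩ := sk_facts hkd (fun i => μ (σ i) + ν (τ i))
    refine ⟨fun i => if σ.symm i ∈ S then 1 else 0, fun i => if τ.symm i ∈ S then 1 else 0,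
      ?_, ?_, ?_, ?_, ?_⟩
    · intro i
      by_cases h1 : σ.symm i ∈ S <;> by_cases h2 : τ.symm i ∈ S <;> simp [h1, h2]
    · have hcard : (univ.filter fun i : Fin d => σ.symm i ∈ S).card = k := by
        rw [← hScard]
        apply card_bij' (fun i _ => σ.symm i) (fun j _ => σ j)
        · intro a ha; exact (mem_filter.mp ha).2
        · intro a ha; rw [mem_filter]; exact ⟨mem_univ _, by rwa [Equiv.symm_apply_apply]⟩
        · intro a _; exact Equiv.apply_symm_apply σ a
        · intro a _; exact Equiv.symm_apply_apply σ a
      rw [Finset.sum_boole, hcard]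
    · have hcard : (univ.filter fun i : Fin d => τ.symm i ∈ S).card = k := by
        rw [← hScard]
        apply card_bij' (fun i _ => τ.symm i) (fun j _ => τ j)
        · intro a ha; exact (mem_filter.mp ha).2
        · intro a ha; rw [mem_filter]; exact ⟨mem_univ _, by rwa [Equiv.symm_apply_apply]⟩
        · intro a _; exact Equiv.apply_symm_apply τ a
        · intro a _; exact Equiv.symm_apply_apply τ a
      rw [Finset.sum_boole, hcard]
    · intro ℓ₁ ℓ₂
      have ecard : ∀ (ρ : Equiv.Perm (Fin d)) (ℓ : ℕ),
          ∑ i ∈ univ.filter (fun i : Fin d => (i : ℕ) ≤ ℓ), (if ρ.symm i ∈ S then (1:ℝ) else 0)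
          = ((S ∩ univ.filter (fun i : Fin d => (ρ i : ℕ) ≤ ℓ)).card : ℝ) := by
        intro ρ ℓ
        rw [Finset.sum_boole]
        congr 1
        rw [filter_filter]
        apply card_bij' (fun i _ => ρ.symm i) (fun j _ => ρ j)
        · intro a ha
          rw [mem_filter] at ha
          rw [mem_inter, mem_filter]
          refine ⟨ha.2.2, mem_univ _, ?_⟩
          rw [Equiv.apply_symm_apply]
          exact ha.2.1
        · intro a ha
          rw [mem_inter, mem_filter] at ha
          rw [mem_filter]
          refine ⟨mem_univ _, ha.2.2, ?_⟩
          rw [Equiv.symm_apply_apply]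
          exact ha.1
        · intro a _; exact Equiv.apply_symm_apply ρ a
        · intro a _; exact Equiv.symm_apply_apply ρ a
      rw [ecard σ (ℓ₁ : ℕ), ecard τ (ℓ₂ : ℕ)]
      set A := univ.filter (fun i : Fin d => (σ i : ℕ) ≤ (ℓ₁ : ℕ)) with hAdef
      set B := univ.filter (fun i : Fin d => (τ i : ℕ) ≤ (ℓ₂ : ℕ)) with hBdef
      have hun : (S ∩ A) ∪ (S ∩ B) = S ∩ (A ∪ B) := (inter_union_distrib_left _ _ _).symm
      have hin : (S ∩ A) ∩ (S ∩ B) = S ∩ (A ∩ B) := by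
        ext x; simp only [mem_inter]; tauto
      have hcui := card_union_add_card_inter (S ∩ A) (S ∩ B)
      rw [hun, hin] at hcui
      have b1 : (S ∩ (A ∪ B)).card ≤ min k ((A ∪ B).card) :=
        le_min (hScard ▸ card_le_card inter_subset_left) (card_le_card inter_subset_right)
      have b2 : (S ∩ (A ∩ B)).card ≤ min k ((A ∩ B).card) :=
        le_min (hScard ▸ card_le_card inter_subset_left) (card_le_card inter_subset_right)
      have : (S ∩ A).card + (S ∩ B).card ≤ min k ((A ∩ B).card) + min k ((A ∪ B).card) := by
        omega
      exact_mod_cast this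
    · rw [hsk]
      have e1 : ∀ (ρ : Equiv.Perm (Fin d)) (h : Fin d → ℝ),
          ∑ i, h i * (if ρ.symm i ∈ S then (1:ℝ) else 0) = ∑ s ∈ S, h (ρ s) := by
        intro ρ h
        have step : ∑ i, h i * (if ρ.symm i ∈ S then (1:ℝ) else 0)
            = ∑ i ∈ univ.filter (fun i => ρ.symm i ∈ S), h i := by
          rw [sum_filter]
          apply sum_congr rfl
          intro i _
          by_cases hi : ρ.symm i ∈ S <;> simp [hi]
        rw [step]
        apply sum_bij' (fun i _ => ρ.symm i) (fun s _ => ρ s)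
        · intro a ha; exact (mem_filter.mp ha).2
        · intro a ha; rw [mem_filter]; exact ⟨mem_univ _, by rwa [Equiv.symm_apply_apply]⟩
        · intro a _; exact Equiv.apply_symm_apply ρ a
        · intro a _; exact Equiv.symm_apply_apply ρ a
        · intro a _; rw [Equiv.apply_symm_apply]
      rw [e1 σ μ, e1 τ ν, ← sum_add_distrib]
  · -- upper bound
    rintro val ⟨x1, x2, hbox, hs1, hs2, hcon, rfl⟩
    set P : ℕ → ℝ := fun m => ∑ i ∈ univ.filter (fun i : Fin d => (i:ℕ) ≤ m), x1 i with hP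
    set Q : ℕ → ℝ := fun m => ∑ i ∈ univ.filter (fun i : Fin d => (i:ℕ) ≤ m), x2 i with hQ
    have hEcard : (univ : Finset (Fin d)).card = d := by simp
    have hsumle : ∀ (y : Fin d → ℝ), (∀ i, y i ≤ 1) → ∀ (s : Finset (Fin d)),
        ∑ i ∈ s, y i ≤ (s.card : ℝ) := by
      intro y hy s
      calc ∑ i ∈ s, y i ≤ ∑ i ∈ s, (1:ℝ) := sum_le_sum fun i _ => hy i
        _ = s.card := by rw [sum_const, nsmul_eq_mul, mul_one]
    have hsuble : ∀ (y : Fin d → ℝ), (∀ i, 0 ≤ y i) → ∀ (s : Finset (Fin d)),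
        ∑ i ∈ s, y i ≤ ∑ i, y i :=
      fun y hy s => sum_le_sum_of_subset_of_nonneg (subset_univ s) (fun i _ _ => hy i)
    have hAh : ∀ m, P m ≤ ((Cset univ (fun i : Fin d => (σ i : ℕ)) m).card : ℝ) := by
      intro m
      rw [show Cset univ (fun i : Fin d => (σ i : ℕ)) m
          = univ.filter (fun i : Fin d => (σ i : ℕ) ≤ m) from rfl, card_filter_perm σ m]
      exact hsumle x1 (fun i => (hbox i).2.1) _
    have hBh : ∀ m, Q m ≤ ((Cset univ (fun i : Fin d => (τ i : ℕ)) m).card : ℝ) := by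
      intro m
      rw [show Cset univ (fun i : Fin d => (τ i : ℕ)) m
          = univ.filter (fun i : Fin d => (τ i : ℕ) ≤ m) from rfl, card_filter_perm τ m]
      exact hsumle x2 (fun i => (hbox i).2.2.2) _
    have hPK : ∀ m, P m ≤ (k:ℝ) := by
      intro m
      have := hsuble x1 (fun i => (hbox i).1) (univ.filter (fun i : Fin d => (i:ℕ) ≤ m))
      rw [hs1] at this
      exact this
    have hQK : ∀ m, Q m ≤ (k:ℝ) := by
      intro m
      have := hsuble x2 (fun i => (hbox i).2.2.1) (univ.filter (fun i : Fin d => (i:ℕ) ≤ m))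
      rw [hs2] at this
      exact this
    have hCh : ∀ m n', P m + Q n' ≤ (k:ℝ)
        + (((Cset univ (fun i : Fin d => (σ i : ℕ)) m
            ∩ Cset univ (fun i : Fin d => (τ i : ℕ)) n').card : ℕ) : ℝ) := by
      intro m n'
      by_cases hm : m < d
      · by_cases hn : n' < d
        · have hcon' := hcon ⟨m, hm⟩ ⟨n', hn⟩
          simp only [Fin.val_mk] at hcon'
          have hmin1 : (min (k:ℝ) (((univ.filter fun i : Fin d => (σ i : ℕ) ≤ m)
              ∩ (univ.filter fun i : Fin d => (τ i : ℕ) ≤ n')).card : ℝ))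
              ≤ (((univ.filter fun i : Fin d => (σ i : ℕ) ≤ m)
              ∩ (univ.filter fun i : Fin d => (τ i : ℕ) ≤ n')).card : ℝ) :=
            min_le_right _ _
          have hmin2 : (min (k:ℝ) (((univ.filter fun i : Fin d => (σ i : ℕ) ≤ m)
              ∪ (univ.filter fun i : Fin d => (τ i : ℕ) ≤ n')).card : ℝ)) ≤ (k:ℝ) :=
            min_le_left _ _
          rw [show Cset univ (fun i : Fin d => (σ i : ℕ)) m
              = univ.filter (fun i : Fin d => (σ i : ℕ) ≤ m) from rfl,
            show Cset univ (fun i : Fin d => (τ i : ℕ)) n'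
              = univ.filter (fun i : Fin d => (τ i : ℕ) ≤ n') from rfl]
          linarith
        · -- n' ≥ d
          have hdn : d ≤ n' := by omega
          have hQn : Q n' = (k:ℝ) := by
            simp only [hQ]
            rw [show univ.filter (fun i : Fin d => (i:ℕ) ≤ n') = univ from
              filter_true_of_mem (fun i _ => le_trans (Nat.le_of_lt i.isLt) hdn)]
            exact hs2
          have hDall : Cset univ (fun i : Fin d => (τ i : ℕ)) n' = univ :=
            filter_true_of_mem (fun i _ => le_trans (Nat.le_of_lt (τ i).isLt) hdn)
          rw [hDall, inter_univ, hQn]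
          linarith [hAh m]
      · have hdm : d ≤ m := by omega
        have hPm : P m = (k:ℝ) := by
          simp only [hP]
          rw [show univ.filter (fun i : Fin d => (i:ℕ) ≤ m) = univ from
            filter_true_of_mem (fun i _ => le_trans (Nat.le_of_lt i.isLt) hdm)]
          exact hs1
        have hCall : Cset univ (fun i : Fin d => (σ i : ℕ)) m = univ :=
          filter_true_of_mem (fun i _ => le_trans (Nat.le_of_lt (σ i).isLt) hdm)
        rw [hCall, univ_inter, hPm]
        linarith [hBh n']
    obtain ⟨w, hwbox, hwsum, hwA, hwB⟩ :=
      lemW d univ hEcard (fun i : Fin d => (σ i : ℕ)) (fun i : Fin d => (τ i : ℕ)) k P Q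
        (Nat.cast_nonneg k) (Nat.cast_le.mpr hkd) hAh hBh hPK hQK hCh
    have hw0 : ∀ i, 0 ≤ w i := fun i => (hwbox i (mem_univ i)).1
    have hw1 : ∀ i, w i ≤ 1 := fun i => (hwbox i (mem_univ i)).2
    have hA1 : ∑ i, μ i * x1 i ≤ ∑ i, μ i * w (σ.symm i) := by
      apply antitone_dominate μ hμ
      · intro m _
        have h := hwA m
        rw [show Cset univ (fun i : Fin d => (σ i : ℕ)) m
            = univ.filter (fun i : Fin d => (σ i : ℕ) ≤ m) from rfl,
          sum_filter_perm σ m w] at h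
        exact h
      · have hcs : ∑ i, w (σ.symm i) = (k:ℝ) := by
          rw [Equiv.sum_comp σ.symm w]
          exact hwsum
        rw [hs1, hcs]
    have hA2 : ∑ i, ν i * x2 i ≤ ∑ i, ν i * w (τ.symm i) := by
      apply antitone_dominate ν hν
      · intro m _
        have h := hwB m
        rw [show Cset univ (fun i : Fin d => (τ i : ℕ)) m
            = univ.filter (fun i : Fin d => (τ i : ℕ) ≤ m) from rfl,
          sum_filter_perm τ m w] at h
        exact h
      · have hcs : ∑ i, w (τ.symm i) = (k:ℝ) := by
          rw [Equiv.sum_comp τ.symm w]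
          exact hwsum
        rw [hs2, hcs]
    have e3 := sum_comp_symm σ μ w
    have e4 := sum_comp_symm τ ν w
    have e5 : ∑ x, μ (σ x) * w x + ∑ x, ν (τ x) * w x
        = ∑ x, w x * (μ (σ x) + ν (τ x)) := by
      rw [← sum_add_distrib]
      apply sum_congr rfl
      intro x _
      ring
    have hfb := frac_bound hk1 hkd (fun i => μ (σ i) + ν (τ i)) w hw0 hw1 hwsum
    linarith
end helpers
end
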